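/- arXiv:2504.11463 — 2 statements merged into one kernel-verified Lean document; each statement's English description precedes it below -/
import Mathlib

section
/- Let N ⊆ ℝ be a Lebesgue measurable set such that there do not exist α, β, γ ∈ N with α + β = γ. Then for every x > 0, the Lebesgue measure of N ∩ [0, x] is at most x/2. -/
/-! If `γ ∈ N`, the reflection `b ↦ γ - b` maps `N ∩ [0, γ]` into `[0, γ]`, preserving measure, and
sum-freeness makes the image disjoint from `N ∩ [0, γ]`; hence `2 · |N ∩ [0, γ]| ≤ γ`. For general
`x`, take `γ ∈ N ∩ [0, x]` within `ε` of the supremum `s` of that set: then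
`|N ∩ [0, x]| ≤ |N ∩ [0, γ]| + (s - γ) ≤ x / 2 + ε`. -/

open MeasureTheory Set

def IsSumFree {α : Type*} [Add α] (s : Set α) : Prop :=
  ∀ a ∈ s, ∀ b ∈ s, a + b ∉ s

theorem isSumFree_iff_not_exists {α : Type*} [Add α] {s : Set α} :
    IsSumFree s ↔ ¬ ∃ a b c, a ∈ s ∧ b ∈ s ∧ c ∈ s ∧ a + b = c := by
  simp only [IsSumFree, not_exists, not_and]
  exact ⟨fun h a b c ha hb hc hab => h a ha b hb (hab ▸ hc),
    fun h a ha b hb hab => h a b _ ha hb hab rfl⟩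

namespace IsSumFree

variable {N : Set ℝ} {γ : ℝ}

theorem disjoint_preimage_sub_left (hsf : IsSumFree N) (hγ : γ ∈ N) (s : Set ℝ) :
    Disjoint (N ∩ s) ((γ - ·) ⁻¹' (N ∩ s)) :=
  disjoint_left.2 fun a ha hγa => hsf a ha.1 (γ - a) hγa.1 (by rwa [add_sub_cancel])

theorem two_mul_volume_inter_Icc_le (hsf : IsSumFree N) (hN : MeasurableSet N) (hγ : γ ∈ N) :
    2 * volume (N ∩ Icc 0 γ) ≤ ENNReal.ofReal γ := by
  set B := N ∩ Icc 0 γ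
  have hB : MeasurableSet B := hN.inter measurableSet_Icc
  have hreflect : (γ - ·) ⁻¹' B ⊆ Icc 0 γ := fun b hb => by
    obtain ⟨h0, hle⟩ := hb.2
    exact ⟨by linarith, by linarith⟩
  calc 2 * volume B = volume B + volume ((γ - ·) ⁻¹' B) := by
        rw [two_mul, (Measure.measurePreserving_sub_left volume γ).measure_preimage
          hB.nullMeasurableSet]
    _ = volume (B ∪ (γ - ·) ⁻¹' B) :=
        (measure_union (hsf.disjoint_preimage_sub_left hγ _) (measurable_const_sub γ hB)).symm
    _ ≤ volume (Icc 0 γ) := measure_mono (union_subset inter_subset_right hreflect)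
    _ = ENNReal.ofReal γ := by rw [Real.volume_Icc, sub_zero]

theorem volume_inter_Icc_le_half (hsf : IsSumFree N) (hN : MeasurableSet N) (x : ℝ) :
    volume (N ∩ Icc 0 x) ≤ ENNReal.ofReal (x / 2) := by
  set S := N ∩ Icc 0 x
  rcases S.eq_empty_or_nonempty with hS | hS
  · simp [hS]
  have hSbdd : BddAbove S := ⟨x, fun t ht => ht.2.2⟩
  refine ENNReal.le_of_forall_pos_le_add fun ε hε _ => ?_
  obtain ⟨γ, ⟨hγN, -, hγx⟩, hγ⟩ := exists_lt_of_lt_csSup hS (sub_lt_self (sSup S) hε)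
  have hcover : S ⊆ (N ∩ Icc 0 γ) ∪ Ioc γ (sSup S) := fun t ht => by
    rcases le_or_gt t γ with htγ | hγt
    · exact Or.inl ⟨ht.1, ht.2.1, htγ⟩
    · exact Or.inr ⟨hγt, le_csSup hSbdd ht⟩
  have hhalf : volume (N ∩ Icc 0 γ) ≤ ENNReal.ofReal (x / 2) := by
    rw [ENNReal.ofReal_div_of_pos two_pos, ENNReal.ofReal_ofNat,
      ENNReal.le_div_iff_mul_le (by simp) (by simp), mul_comm]
    exact (hsf.two_mul_volume_inter_Icc_le hN hγN).trans (ENNReal.ofReal_le_ofReal hγx)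
  calc volume S ≤ volume (N ∩ Icc 0 γ) + volume (Ioc γ (sSup S)) :=
        (measure_mono hcover).trans (measure_union_le _ _)
    _ ≤ ENNReal.ofReal (x / 2) + ε := by
        gcongr
        rw [Real.volume_Ioc, ← ENNReal.ofReal_coe_nnreal]
        exact ENNReal.ofReal_le_ofReal (sub_le_comm.1 hγ.le)

end IsSumFree

theorem sumfree_measure_le_half (N : Set ℝ) (hN : MeasurableSet N)
    (hsf : ¬ ∃ α β γ : ℝ, α ∈ N ∧ β ∈ N ∧ γ ∈ N ∧ α + β = γ) :
    ∀ x : ℝ, 0 < x → volume (N ∩ Icc 0 x) ≤ ENNReal.ofReal (x / 2) := fun x _ =>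
  (isSumFree_iff_not_exists.2 hsf).volume_inter_Icc_le_half hN x
end

section
/- Let N ⊆ ℝ be a Lebesgue measurable set and α > 0 a real number such that the Lebesgue measure of N ∩ [0, α] is strictly greater than α/2. Then there exists a real number β with 0 < β < α such that both β ∈ N and α - β ∈ N. -/
/-!
The reflection `β ↦ α - β` preserves Lebesgue measure and maps `(0, α)` onto itself, so
`N ∩ (0, α)` and its reflection are two subsets of `(0, α)` whose measures add up to more than
`α`; hence they intersect, and any point of the intersection is a suitable `β`.
-/

open MeasureTheory Set

theorem exists_mem_and_sub_mem_of_measure_lt_add {G : Type*} [MeasurableSpace G] [AddGroup G]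
    [MeasurableAdd G] [MeasurableNeg G] (μ : Measure G) [μ.IsNegInvariant]
    [μ.IsAddLeftInvariant] {s u : Set G} {g : G} (hs : MeasurableSet s) (hs_sub : s ⊆ u)
    (hreflect_sub : (g - ·) ⁻¹' s ⊆ u) (h : μ u < μ s + μ s) :
    ∃ x ∈ s, g - x ∈ s := by
  have hrefl : MeasurePreserving (g - ·) μ μ := μ.measurePreserving_sub_left g
  have hmeas : μ ((g - ·) ⁻¹' s) = μ s := hrefl.measure_preimage hs.nullMeasurableSet
  nth_rw 2 [← hmeas] at h
  exact nonempty_inter_of_measure_lt_add μ (hs.preimage hrefl.measurable) hs_sub hreflect_sub h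

theorem exists_sum_decomposition_general (N : Set ℝ) (hN : MeasurableSet N) (α : ℝ)
    (h : ENNReal.ofReal (α / 2) < volume (N ∩ Icc 0 α)) :
    ∃ β : ℝ, 0 < β ∧ β < α ∧ β ∈ N ∧ α - β ∈ N := by
  have hvol : volume (N ∩ Ioo 0 α) = volume (N ∩ Icc 0 α) :=
    measure_congr ((ae_eq_refl N).inter Ioo_ae_eq_Icc)
  have hlt : volume (Ioo 0 α) < volume (N ∩ Ioo 0 α) + volume (N ∩ Ioo 0 α) :=
    calc volume (Ioo 0 α) = ENNReal.ofReal (α / 2 + α / 2) := by rw [Real.volume_Ioo, sub_zero, add_halves]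
      _ ≤ ENNReal.ofReal (α / 2) + ENNReal.ofReal (α / 2) := ENNReal.ofReal_add_le
      _ < _ := by rw [hvol]; exact ENNReal.add_lt_add h h
  obtain ⟨β, ⟨hβN, hβ0, hβα⟩, hβ'N, -⟩ :=
    exists_mem_and_sub_mem_of_measure_lt_add volume (hN.inter measurableSet_Ioo)
      inter_subset_right (fun x hx => ⟨by linarith [hx.2.2], by linarith [hx.2.1]⟩) hlt
  exact ⟨β, hβ0, hβα, hβN, hβ'N⟩

theorem exists_sum_decomposition (N : Set ℝ) (hN : MeasurableSet N) (α : ℝ) (hα : 0 < α)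
    (h : ENNReal.ofReal (α / 2) < volume (N ∩ Icc 0 α)) :
    ∃ β : ℝ, 0 < β ∧ β < α ∧ β ∈ N ∧ α - β ∈ N :=
  exists_sum_decomposition_general N hN α h
end
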